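/- arXiv:2602.01907 — 3 statements merged into one kernel-verified Lean document; each statement's English description precedes it below -/
import Mathlib

section
/- Assume Σ_{i=1}^n k_i = (1−n)/2. Let Ω ⊆ ℝ^{n+1} be open and axially symmetric and let f : Ω → ℝ_n be a slice function of class C¹. Then S̲f = 0 and S̲(f∘c) = 0 at every point of Ω whose coordinates x_1,…,x_n are all nonzero, where c : ℝ^{n+1} → ℝ^{n+1} is the map x ↦ x^c. -/
noncomputable section

open scoped BigOperators

namespace Dunkl

/-! ### An ℓ¹ norm on an arbitrary real vector space, via a Hamel basis -/

variable {ι V : Type*} [AddCommGroup V] [Module ℝ V]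

def l1fun (b : Module.Basis ι ℝ V) (v : V) : ℝ := ∑ a ∈ (b.repr v).support, |b.repr v a|

lemma l1fun_eq_sum (b : Module.Basis ι ℝ V) (v : V) {s : Finset ι} (hs : (b.repr v).support ⊆ s) :
    l1fun b v = ∑ a ∈ s, |b.repr v a| := by
  unfold l1fun
  apply Finset.sum_subset hs
  intro a _ ha
  simp [Finsupp.notMem_support_iff.mp ha]

def l1AddGroupNorm (b : Module.Basis ι ℝ V) : AddGroupNorm V where
  toFun := l1fun b
  map_zero' := by simp [l1fun]
  add_le' := by
    intro x y
    classical
    set s := (b.repr x).support ∪ (b.repr y).support with hs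
    have hxy : (b.repr (x + y)).support ⊆ s := by
      rw [map_add]; exact Finsupp.support_add
    calc l1fun b (x + y) = ∑ a ∈ s, |b.repr (x + y) a| := l1fun_eq_sum b _ hxy
      _ ≤ ∑ a ∈ s, (|b.repr x a| + |b.repr y a|) := by
          refine Finset.sum_le_sum fun a _ => ?_
          rw [map_add]
          exact abs_add_le _ _
      _ = (∑ a ∈ s, |b.repr x a|) + ∑ a ∈ s, |b.repr y a| := Finset.sum_add_distrib
      _ = l1fun b x + l1fun b y := by
          rw [← l1fun_eq_sum b x Finset.subset_union_left,
            ← l1fun_eq_sum b y Finset.subset_union_right]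
  neg' := by
    intro x
    simp [l1fun, Finsupp.support_neg]
  eq_zero_of_map_eq_zero' := by
    intro x hx
    by_contra hx0
    have hsupp : (b.repr x).support.Nonempty := by
      rw [Finsupp.support_nonempty_iff]
      simpa using hx0
    obtain ⟨a, ha⟩ := hsupp
    have h1 : |b.repr x a| = 0 := by
      have := (Finset.sum_eq_zero_iff_of_nonneg
        (fun i _ => abs_nonneg (b.repr x i))).mp hx a ha
      exact this
    exact Finsupp.mem_support_iff.mp ha (abs_eq_zero.mp h1)

/-! ### The Clifford algebra ℝ_n = Cl(0,n) -/

def Qneg (n : ℕ) : QuadraticForm ℝ (Fin n → ℝ) :=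
  QuadraticMap.weightedSumSquares ℝ (fun _ : Fin n => (-1 : ℝ))

/-- The real Clifford algebra `Cl(0,n)`. -/
abbrev Cl (n : ℕ) : Type := CliffordAlgebra (Qneg n)

instance (n : ℕ) : NormedAddCommGroup (Cl n) :=
  AddGroupNorm.toNormedAddCommGroup (l1AddGroupNorm (Module.Basis.ofVectorSpace ℝ (Cl n)))

lemma Cl.norm_def (n : ℕ) (v : Cl n) :
    ‖v‖ = l1fun (Module.Basis.ofVectorSpace ℝ (Cl n)) v := rfl

instance (n : ℕ) : NormedSpace ℝ (Cl n) where
  norm_smul_le := by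
    intro c x
    classical
    set b := Module.Basis.ofVectorSpace ℝ (Cl n)
    have hsub : (b.repr (c • x)).support ⊆ (b.repr x).support := by
      rw [map_smul]
      exact Finsupp.support_smul
    rw [Cl.norm_def, Cl.norm_def, l1fun_eq_sum b _ hsub, l1fun]
    rw [Real.norm_eq_abs, Finset.mul_sum]
    refine le_of_eq (Finset.sum_congr rfl fun a _ => ?_)
    rw [map_smul, Finsupp.smul_apply, smul_eq_mul, abs_mul]

/-- The generators `e_1, …, e_n` of `Cl(0,n)`. -/
def gen {n : ℕ} (i : Fin n) : Cl n := CliffordAlgebra.ι (Qneg n) (Pi.single i 1)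


/-! ### Points, paravectors and differential operators -/

/-- Points of `ℝ^{n+1}`, with coordinates `x 0, x 1, …, x n`. -/
abbrev Pt (n : ℕ) : Type := Fin (n+1) → ℝ

variable {n : ℕ}

/-- The imaginary part `x̲ = Σ x_i e_i` of a point, as an element of `Cl(0,n)`. -/
def im (x : Pt n) : Cl n := ∑ i : Fin n, x i.succ • gen i

/-- The paravector `x_0 + Σ x_i e_i` associated to a point of `ℝ^{n+1}`. -/
def par (x : Pt n) : Cl n := algebraMap ℝ (Cl n) (x 0) + im x

/-- `‖x̲‖² = Σ_{i=1}^n x_i²`. -/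
def normSqIm (x : Pt n) : ℝ := ∑ i : Fin n, (x i.succ)^2

/-- `x̲⁻¹ = -x̲/‖x̲‖²` (junk value `0` when `x̲ = 0`). -/
def imInv (x : Pt n) : Cl n := -((normSqIm x)⁻¹ • im x)

/-- The Clifford conjugate `x^c = x_0 - x̲`, as a point of `ℝ^{n+1}`. -/
def conj (x : Pt n) : Pt n := fun t => if t = 0 then x t else -(x t)

/-- The reflection `r_i`, changing the sign of the coordinate `x_i` (`1 ≤ i ≤ n`). -/
def refl (i : Fin n) (x : Pt n) : Pt n := fun t => if t = i.succ then -(x t) else x t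

/-- The partial derivative `∂f/∂x_i` of an `ℝ_n`-valued function. -/
def pd (i : Fin (n+1)) (f : Pt n → Cl n) : Pt n → Cl n :=
  fun x => fderiv ℝ f x (Pi.single i 1)

/-- The Euler operator `𝔼 f = Σ_{i=1}^n x_i ∂_{x_i} f`. -/
def euler (f : Pt n → Cl n) : Pt n → Cl n :=
  fun x => ∑ i : Fin n, x i.succ • pd i.succ f x

/-- The Cauchy-Riemann operator `∂̄f = ∂_{x_0}f + Σ e_i ∂_{x_i} f`. -/
def CRop (f : Pt n → Cl n) : Pt n → Cl n :=
  fun x => pd 0 f x + ∑ i : Fin n, gen i * pd i.succ f x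

/-- `ϑ̄f(x) = ∂_{x_0}f(x) − x̲⁻¹·(𝔼f)(x)`. -/
def thetaBar (f : Pt n → Cl n) : Pt n → Cl n :=
  fun x => pd 0 f x - imInv x * euler f x

/-- The spherical Dirac operator `Γf = -Σ_{i<j} e_i e_j (x_i ∂_{x_j}f − x_j ∂_{x_i}f)`. -/
def sphDirac (f : Pt n → Cl n) : Pt n → Cl n :=
  fun x => -∑ i : Fin n, ∑ j : Fin n,
    if i < j then gen i * (gen j * (x i.succ • pd j.succ f x - x j.succ • pd i.succ f x)) else 0

/-! ### Dunkl operators for the reflection group ℤ₂ⁿ -/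

/-- The Dunkl operator `T_i f(x) = ∂_{x_i}f(x) + (k_i/x_i)(f(x) − f(r_i x))`. -/
def T (k : Fin n → ℝ) (i : Fin n) (f : Pt n → Cl n) : Pt n → Cl n :=
  fun x => pd i.succ f x + (k i / x i.succ) • (f x - f (refl i x))

/-- The Dunkl-Dirac operator `D̲f = Σ e_i T_i f`. -/
def dunklDirac (k : Fin n → ℝ) (f : Pt n → Cl n) : Pt n → Cl n :=
  fun x => ∑ i : Fin n, gen i * T k i f x

/-- The Dunkl-Cauchy-Riemann operator `Df = ∂_{x_0}f + D̲f`. -/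
def dunklCR (k : Fin n → ℝ) (f : Pt n → Cl n) : Pt n → Cl n :=
  fun x => pd 0 f x + dunklDirac k f x

/-- The Dunkl Laplacian `Δ_D f = Σ T_i(T_i f)`. -/
def dunklLap (k : Fin n → ℝ) (f : Pt n → Cl n) : Pt n → Cl n :=
  fun x => ∑ i : Fin n, T k i (T k i f) x

/-- The Casimir operator `S̲f = ½(x̲·(D̲f) − D̲(x̲f) − f)`. -/
def casimir (k : Fin n → ℝ) (f : Pt n → Cl n) : Pt n → Cl n :=
  fun x => (2:ℝ)⁻¹ • (im x * dunklDirac k f x - dunklDirac k (fun y => im y * f y) x - f x)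

/-- The Casimir operator in the form `S̲f = x̲·(D̲f) + 𝔼f`
(valid when `Σ k_i = (1−n)/2`). -/
def scas (k : Fin n → ℝ) (f : Pt n → Cl n) : Pt n → Cl n :=
  fun x => im x * dunklDirac k f x + euler f x

/-- `S̃f = Σ_{i=1}^n k_i (f − f∘r_i)`. -/
def stilde (k : Fin n → ℝ) (f : Pt n → Cl n) : Pt n → Cl n :=
  fun x => ∑ i : Fin n, k i • (f x - f (refl i x))

/-- The spherical value `f_s°(x) = ½(f(x) + f(x^c))`. -/
def sval (f : Pt n → Cl n) : Pt n → Cl n :=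
  fun x => (2:ℝ)⁻¹ • (f x + f (conj x))

/-- `S′f = S̃(f_s°)`. -/
def sprime (k : Fin n → ℝ) (f : Pt n → Cl n) : Pt n → Cl n :=
  stilde k (sval f)

/-- `S″f = S̃((x̲f)_s°)`. -/
def sdprime (k : Fin n → ℝ) (f : Pt n → Cl n) : Pt n → Cl n :=
  stilde k (sval (fun y => im y * f y))

/-! ### Symmetric sets and slice functions -/

/-- A point has all the coordinates `x_1, …, x_n` nonzero. -/
def allNZ (x : Pt n) : Prop := ∀ i : Fin n, x i.succ ≠ 0

/-- A set invariant under all the reflections `r_1, …, r_n`. -/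
def ReflInv (Ω : Set (Pt n)) : Prop := ∀ i : Fin n, ∀ x ∈ Ω, refl i x ∈ Ω

/-- An axially symmetric subset of `ℝ^{n+1}`. -/
def AxSymm (Ω : Set (Pt n)) : Prop :=
  ∀ x ∈ Ω, ∀ y : Pt n, y 0 = x 0 → normSqIm y = normSqIm x → y ∈ Ω

/-- The set `𝕊` of imaginary units of the paravector space. -/
def unitSphere (n : ℕ) : Set (Pt n) := {J | J 0 = 0 ∧ normSqIm J = 1}

/-- The point `α + βJ` of `ℝ^{n+1}`. -/
def ptOf (α β : ℝ) (J : Pt n) : Pt n := fun t => (if t = 0 then α else 0) + β * J t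

/-- The set `D = {(α,β) : α + βJ ∈ Ω for all J ∈ 𝕊}`. -/
def sliceDom (Ω : Set (Pt n)) : Set (ℝ × ℝ) :=
  {p | ∀ J ∈ unitSphere n, ptOf p.1 p.2 J ∈ Ω}

/-- `f` is a slice function on `Ω`. -/
def IsSlice (Ω : Set (Pt n)) (f : Pt n → Cl n) : Prop :=
  ∃ F0 F1 : ℝ × ℝ → Cl n,
    (∀ p ∈ sliceDom Ω, F0 (p.1, -p.2) = F0 p) ∧
    (∀ p ∈ sliceDom Ω, F1 (p.1, -p.2) = -F1 p) ∧
    (∀ p ∈ sliceDom Ω, ∀ J ∈ unitSphere n, f (ptOf p.1 p.2 J) = F0 p + im J * F1 p)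

/-- `f` is a slice function of class `C¹` on `Ω`. -/
def IsSliceC1 (Ω : Set (Pt n)) (f : Pt n → Cl n) : Prop :=
  ∃ F0 F1 : ℝ × ℝ → Cl n,
    ContDiffOn ℝ 1 F0 (sliceDom Ω) ∧ ContDiffOn ℝ 1 F1 (sliceDom Ω) ∧
    (∀ p ∈ sliceDom Ω, F0 (p.1, -p.2) = F0 p) ∧
    (∀ p ∈ sliceDom Ω, F1 (p.1, -p.2) = -F1 p) ∧
    (∀ p ∈ sliceDom Ω, ∀ J ∈ unitSphere n, f (ptOf p.1 p.2 J) = F0 p + im J * F1 p)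

/-- `f` is slice-regular on `Ω`: it is an (inclusive) slice function of class `C¹`
whose inducing stem function satisfies the Cauchy-Riemann equations. -/
def IsSliceReg (Ω : Set (Pt n)) (f : Pt n → Cl n) : Prop :=
  ∃ F0 F1 : ℝ × ℝ → Cl n,
    ContDiffOn ℝ 1 F0 (sliceDom Ω) ∧ ContDiffOn ℝ 1 F1 (sliceDom Ω) ∧
    (∀ p ∈ sliceDom Ω,
      fderivWithin ℝ F0 (sliceDom Ω) p (1, 0) = fderivWithin ℝ F1 (sliceDom Ω) p (0, 1) ∧
      fderivWithin ℝ F0 (sliceDom Ω) p (0, 1) = -(fderivWithin ℝ F1 (sliceDom Ω) p (1, 0))) ∧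
    (∀ p ∈ sliceDom Ω, F0 (p.1, -p.2) = F0 p) ∧
    (∀ p ∈ sliceDom Ω, F1 (p.1, -p.2) = -F1 p) ∧
    (∀ p ∈ sliceDom Ω, ∀ J ∈ unitSphere n, f (ptOf p.1 p.2 J) = F0 p + im J * F1 p)

/-- Polynomial functions `ℝ^{n+1} → ℝ_n`. -/
def IsPolyFun (f : Pt n → Cl n) : Prop :=
  ∃ (s : Finset (Fin (n+1) → ℕ)) (a : (Fin (n+1) → ℕ) → Cl n),
    ∀ x : Pt n, f x = ∑ ν ∈ s, (∏ i : Fin (n+1), x i ^ ν i) • a ν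


/-! ### Intermediate Dunkl-Dirac operators associated with a subset `A ⊆ {1,…,n}` -/

/-- `x̲_A = Σ_{i∈A} x_i e_i`. -/
def imA (A : Finset (Fin n)) (x : Pt n) : Cl n := ∑ i ∈ A, x i.succ • gen i

/-- `𝔼_A f = Σ_{i∈A} x_i ∂_{x_i} f`. -/
def eulerA (A : Finset (Fin n)) (f : Pt n → Cl n) : Pt n → Cl n :=
  fun x => ∑ i ∈ A, x i.succ • pd i.succ f x

/-- `D̲_A f = Σ_{i∈A} e_i T_i f`. -/
def dunklDiracA (k : Fin n → ℝ) (A : Finset (Fin n)) (f : Pt n → Cl n) : Pt n → Cl n :=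
  fun x => ∑ i ∈ A, gen i * T k i f x

/-- `S̲_A f = ½(x̲_A (D̲_A f) − D̲_A(x̲_A f) − f)`. -/
def casimirA (k : Fin n → ℝ) (A : Finset (Fin n)) (f : Pt n → Cl n) : Pt n → Cl n :=
  fun x => (2:ℝ)⁻¹ •
    (imA A x * dunklDiracA k A f x - dunklDiracA k A (fun y => imA A y * f y) x - f x)

/-- `S̲_A f = x̲_A (D̲_A f) + 𝔼_A f` (the form valid for `A`-admissible multiplicities). -/
def scasA (k : Fin n → ℝ) (A : Finset (Fin n)) (f : Pt n → Cl n) : Pt n → Cl n :=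
  fun x => imA A x * dunklDiracA k A f x + eulerA A f x

/-- The composition `r_A` of the reflections `r_i`, `i ∈ A`. -/
def reflA (A : Finset (Fin n)) (x : Pt n) : Pt n :=
  fun t => Fin.cases (x 0) (fun i => if i ∈ A then -(x i.succ) else x i.succ) t

/-- The `A`-spherical value `f°_{s,A}(x) = ½(f(x) + f(r_A x))`. -/
def svalA (A : Finset (Fin n)) (f : Pt n → Cl n) : Pt n → Cl n :=
  fun x => (2:ℝ)⁻¹ • (f x + f (reflA A x))

/-- `S̃_A f = Σ_{i∈A} k_i (f − f∘r_i)`. -/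
def stildeA (k : Fin n → ℝ) (A : Finset (Fin n)) (f : Pt n → Cl n) : Pt n → Cl n :=
  fun x => ∑ i ∈ A, k i • (f x - f (refl i x))

/-- `S′_A f = S̃_A(f°_{s,A})`. -/
def sprimeA (k : Fin n → ℝ) (A : Finset (Fin n)) (f : Pt n → Cl n) : Pt n → Cl n :=
  stildeA k A (svalA A f)

/-- `S″_A f = S̃_A((x̲_A f)°_{s,A})`. -/
def sdprimeA (k : Fin n → ℝ) (A : Finset (Fin n)) (f : Pt n → Cl n) : Pt n → Cl n :=
  stildeA k A (svalA A (fun y => imA A y * f y))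

/-- The multiplicities `(k_i)_{i∈A}` are `A`-admissible: nonpositive on `A`, at most one of
them vanishing, and `Σ_{i∈A} k_i = (1−|A|)/2`. -/
def AdmissibleOn (A : Finset (Fin n)) (k : Fin n → ℝ) : Prop :=
  (∀ i ∈ A, k i ≤ 0) ∧ (∀ i ∈ A, ∀ j ∈ A, k i = 0 → k j = 0 → i = j) ∧
  (∑ i ∈ A, k i = (1 - (A.card : ℝ)) / 2)

/-- The condition `𝒮_A f = 0` on `Ω`:  `S̲_A f` vanishes at every point of `Ω` whose
coordinates `x_i`, `i ∈ A`, are all nonzero, and `S′_A f = S″_A f = 0` on `Ω`. -/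
def SAvanishes (k : Fin n → ℝ) (A : Finset (Fin n)) (Ω : Set (Pt n))
    (f : Pt n → Cl n) : Prop :=
  (∀ x ∈ Ω, (∀ i ∈ A, x i.succ ≠ 0) → scasA k A f x = 0) ∧
  (∀ x ∈ Ω, sprimeA k A f x = 0) ∧
  (∀ x ∈ Ω, sdprimeA k A f x = 0)

/-- An `A`-circular subset of `ℝ^{n+1}`. -/
def ACircular (A : Finset (Fin n)) (Ω : Set (Pt n)) : Prop :=
  ∀ x ∈ Ω, ∀ y : Pt n, y 0 = x 0 → (∀ i : Fin n, i ∉ A → y i.succ = x i.succ) →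
    (∑ i ∈ A, (y i.succ)^2) = (∑ i ∈ A, (x i.succ)^2) → y ∈ Ω


/-! ### Auxiliary lemmas -/

section Aux
variable {n : ℕ}

lemma Qneg_apply (v : Fin n → ℝ) : Qneg n v = -∑ i, v i ^ 2 := by
  rw [show (-∑ i, v i ^ 2) = ∑ i, (-1 : ℝ) • (v i * v i) by
    rw [← Finset.sum_neg_distrib]; exact Finset.sum_congr rfl fun i _ => by simp [sq]]
  simp [Qneg, QuadraticMap.weightedSumSquares_apply]

lemma iota_eq_sum (v : Fin n → ℝ) :
    CliffordAlgebra.ι (Qneg n) v = ∑ i, v i • gen i := by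
  have h : v = ∑ i, v i • (Pi.single i 1 : Fin n → ℝ) := by
    funext t; simp [Pi.single_apply]
  rw [show CliffordAlgebra.ι (Qneg n) v
      = CliffordAlgebra.ι (Qneg n) (∑ i, v i • (Pi.single i 1 : Fin n → ℝ)) by rw [← h]]
  simp [gen]

lemma gen_sq (i : Fin n) : gen i * gen i = -1 := by
  rw [gen, CliffordAlgebra.ι_sq_scalar, Qneg_apply]
  have : ∑ j, ((Pi.single i 1 : Fin n → ℝ) j) ^ 2 = 1 := by
    simp [Pi.single_apply]
  rw [this]
  simp

lemma gen_anticomm {i j : Fin n} (h : i ≠ j) : gen i * gen j = -(gen j * gen i) := by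
  have hp : QuadraticMap.polar (Qneg n) (Pi.single i 1 : Fin n → ℝ) (Pi.single j 1) = 0 := by
    unfold QuadraticMap.polar
    rw [Qneg_apply, Qneg_apply, Qneg_apply]
    have h1 : ∑ t, ((Pi.single i 1 + Pi.single j 1 : Fin n → ℝ) t) ^ 2 = 2 := by
      have : ∀ t, ((Pi.single i 1 + Pi.single j 1 : Fin n → ℝ) t) ^ 2
          = (if t = i then 1 else 0) + (if t = j then 1 else 0) := by
        intro t
        by_cases hti : t = i <;> by_cases htj : t = j <;>
          simp_all [Pi.single_apply] <;> ring_nf <;> simp_all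
      rw [Finset.sum_congr rfl fun t _ => this t, Finset.sum_add_distrib]
      simp
      norm_num
    have h2 : ∑ t, ((Pi.single i 1 : Fin n → ℝ) t) ^ 2 = 1 := by simp [Pi.single_apply]
    have h3 : ∑ t, ((Pi.single j 1 : Fin n → ℝ) t) ^ 2 = 1 := by simp [Pi.single_apply]
    rw [h1, h2, h3]; ring
  have := CliffordAlgebra.ι_mul_ι_add_swap (Q := Qneg n) (Pi.single i 1 : Fin n → ℝ) (Pi.single j 1)
  rw [hp, map_zero] at this
  exact eq_neg_of_add_eq_zero_left this

/-- products of generators over sorted lists -/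
lemma gen_mul_list_prod (i : Fin n) (l : List (Fin n)) (hl : l.Pairwise (· < ·)) :
    ∃ (ε : ℝ) (m : List (Fin n)), m.Pairwise (· < ·) ∧ (∀ a ∈ m, a ∈ i :: l) ∧
      gen i * (l.map gen).prod = ε • (m.map gen).prod := by
  induction l generalizing i with
  | nil => exact ⟨1, [i], by simp, by simp, by simp⟩
  | cons j l' ih =>
    have hl' : l'.Pairwise (· < ·) := hl.tail
    rcases lt_trichotomy i j with hij | rfl | hij
    · refine ⟨1, i :: j :: l', ?_, ?_, by simp⟩
      · refine List.Pairwise.cons ?_ hl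
        intro a ha
        rcases List.mem_cons.mp ha with rfl | ha'
        · exact hij
        · exact hij.trans (List.rel_of_pairwise_cons hl ha')
      · intro a ha; exact ha
    · refine ⟨-1, l', hl', fun a ha => by simp [ha], ?_⟩
      rw [List.map_cons, List.prod_cons, ← mul_assoc, gen_sq]
      simp
    · obtain ⟨ε, m, hm, hmem, he⟩ := ih i hl'
      refine ⟨-ε, j :: m, ?_, ?_, ?_⟩
      · refine List.Pairwise.cons ?_ hm
        intro a ha
        rcases List.mem_cons.mp (hmem a ha) with rfl | ha'
        · exact hij
        · exact List.rel_of_pairwise_cons hl ha'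
      · intro a ha
        rcases List.mem_cons.mp ha with rfl | ha'
        · simp
        · rcases List.mem_cons.mp (hmem a ha') with rfl | h''
          · simp
          · simp [h'']
      · rw [List.map_cons, List.prod_cons, ← mul_assoc, gen_anticomm (ne_of_gt hij),
          neg_mul, mul_assoc, he, List.map_cons, List.prod_cons]
        rw [mul_smul_comm]
        simp

def prodGen (s : Finset (Fin n)) : Cl n := ((s.sort (· ≤ ·)).map gen).prod

lemma prodGen_of_sorted {m : List (Fin n)} (hm : m.Pairwise (· < ·)) :
    (m.map gen).prod = prodGen m.toFinset := by
  have hnd : m.Nodup := hm.imp ne_of_lt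
  have : m.toFinset.sort (· ≤ ·) = m :=
    (List.toFinset_sort (· ≤ ·) hnd).mpr (hm.imp le_of_lt)
  rw [prodGen, this]

lemma span_prodGen_top :
    Submodule.span ℝ (Set.range (prodGen (n := n))) = ⊤ := by
  set M := Submodule.span ℝ (Set.range (prodGen (n := n))) with hM
  have hone : (1 : Cl n) ∈ M := by
    have : (1 : Cl n) = prodGen (∅ : Finset (Fin n)) := by
      simp [prodGen, Finset.sort_empty]
    rw [this]
    exact Submodule.subset_span ⟨∅, rfl⟩
  have hgenmul : ∀ (i : Fin n), ∀ z ∈ M, gen i * z ∈ M := by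
    intro i z hz
    induction hz using Submodule.span_induction with
    | mem w hw =>
      obtain ⟨s, rfl⟩ := hw
      obtain ⟨ε, m, hm, _, he⟩ := gen_mul_list_prod i (s.sort (· ≤ ·))
        (Finset.sortedLT_sort s).pairwise
      rw [prodGen, he, prodGen_of_sorted hm]
      exact Submodule.smul_mem _ _ (Submodule.subset_span ⟨_, rfl⟩)
    | zero => simpa using Submodule.zero_mem M
    | add a b _ _ ha hb => rw [mul_add]; exact Submodule.add_mem _ ha hb
    | smul c a _ ha => rw [mul_smul_comm]; exact Submodule.smul_mem _ _ ha
  have hiota : ∀ (v : Fin n → ℝ), ∀ z ∈ M, CliffordAlgebra.ι (Qneg n) v * z ∈ M := by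
    intro v z hz
    rw [iota_eq_sum, Finset.sum_mul]
    refine Submodule.sum_mem _ fun i _ => ?_
    rw [smul_mul_assoc]
    exact Submodule.smul_mem _ _ (hgenmul i z hz)
  rw [eq_top_iff]
  intro a _
  have key : ∀ a : Cl n, ∀ z ∈ M, a * z ∈ M := by
    intro a
    induction a using CliffordAlgebra.induction with
    | algebraMap r => intro z hz; rw [Algebra.algebraMap_eq_smul_one, smul_mul_assoc, one_mul]
                      exact Submodule.smul_mem _ _ hz
    | ι v => exact hiota v
    | mul a b ha hb => intro z hz; rw [mul_assoc]; exact ha _ (hb z hz)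
    | add a b ha hb => intro z hz; rw [add_mul]; exact Submodule.add_mem _ (ha z hz) (hb z hz)
  simpa using key a 1 hone

instance : Module.Finite ℝ (Cl n) :=
  ⟨span_prodGen_top ▸ Submodule.fg_span (Set.finite_range _)⟩


end Aux

section Aux2
variable {n : ℕ}

lemma im_apply (x : Pt n) : im x = ∑ i, x i.succ • gen i := rfl

lemma im_eq_iota (x : Pt n) : im x = CliffordAlgebra.ι (Qneg n) (fun i => x i.succ) := by
  rw [iota_eq_sum]; rfl

lemma im_mul_im (x : Pt n) : im x * im x = algebraMap ℝ (Cl n) (-(normSqIm x)) := by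
  rw [im_eq_iota, CliffordAlgebra.ι_sq_scalar, Qneg_apply]; rfl

def mulCLM : Cl n →L[ℝ] Cl n →L[ℝ] Cl n :=
  LinearMap.toContinuousLinearMap
    ((LinearMap.toContinuousLinearMap.toLinearMap).comp (LinearMap.mul ℝ (Cl n)))

@[simp] lemma mulCLM_apply (a b : Cl n) : mulCLM a b = a * b := by
  simp [mulCLM, LinearMap.mul_apply']

def imCLM : Pt n →L[ℝ] Cl n :=
  LinearMap.toContinuousLinearMap
    (∑ i : Fin n, LinearMap.smulRight (LinearMap.proj i.succ) (gen i))

@[simp] lemma imCLM_apply (x : Pt n) : imCLM x = im x := by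
  simp [imCLM, im, LinearMap.sum_apply]

lemma continuous_normSqIm : Continuous (normSqIm (n := n)) := by
  unfold normSqIm; fun_prop

lemma ptOf_zero (α β : ℝ) (J : Pt n) (hJ : J ∈ unitSphere n) : ptOf α β J 0 = α := by
  simp [ptOf, hJ.1]

lemma ptOf_succ (α β : ℝ) (J : Pt n) (i : Fin n) : ptOf α β J i.succ = β * J i.succ := by
  simp [ptOf, Fin.succ_ne_zero i]

lemma normSqIm_ptOf (α β : ℝ) (J : Pt n) (hJ : J ∈ unitSphere n) :
    normSqIm (ptOf α β J) = β ^ 2 := by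
  unfold normSqIm
  rw [Finset.sum_congr rfl fun i _ => by rw [ptOf_succ, mul_pow]]
  rw [← Finset.mul_sum]
  have := hJ.2
  unfold normSqIm at this
  rw [this, mul_one]

lemma sliceDom_isOpen (hn : 1 ≤ n) {Ω : Set (Pt n)} (hopen : IsOpen Ω) (hax : AxSymm Ω) :
    IsOpen (sliceDom Ω) := by
  set i₀ : Fin n := ⟨0, hn⟩
  set J₀ : Pt n := Pi.single i₀.succ 1 with hJ₀def
  have hJ₀ : J₀ ∈ unitSphere n := by
    constructor
    · exact Pi.single_eq_of_ne (Fin.succ_ne_zero i₀).symm 1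
    · have hterm : ∀ i : Fin n, (J₀ i.succ) ^ 2 = if i = i₀ then 1 else 0 := by
        intro i
        by_cases h : i = i₀ <;> simp [hJ₀def, Pi.single_apply, h, Fin.succ_inj]
      show (∑ i : Fin n, (J₀ i.succ) ^ 2) = 1
      rw [Finset.sum_congr rfl fun i _ => hterm i]
      simp
  have hset : sliceDom Ω = (fun p : ℝ × ℝ => ptOf p.1 p.2 J₀) ⁻¹' Ω := by
    ext p
    constructor
    · intro hp; exact hp J₀ hJ₀
    · intro hp J hJ
      refine hax _ hp _ ?_ ?_
      · show ptOf p.1 p.2 J 0 = ptOf p.1 p.2 J₀ 0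
        rw [ptOf_zero _ _ _ hJ, ptOf_zero _ _ _ hJ₀]
      · show normSqIm (ptOf p.1 p.2 J) = normSqIm (ptOf p.1 p.2 J₀)
        rw [normSqIm_ptOf _ _ _ hJ, normSqIm_ptOf _ _ _ hJ₀]
  rw [hset]
  refine hopen.preimage ?_
  refine continuous_pi fun t => ?_
  by_cases ht : t = 0 <;> simp [ptOf, ht] <;> fun_prop

lemma mem_sliceDom {Ω : Set (Pt n)} (hax : AxSymm Ω) {y : Pt n} (hy : y ∈ Ω) :
    (y 0, Real.sqrt (normSqIm y)) ∈ sliceDom Ω := by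
  intro J hJ
  refine hax _ hy _ (ptOf_zero _ _ _ hJ) ?_
  rw [normSqIm_ptOf _ _ _ hJ, Real.sq_sqrt]
  unfold normSqIm
  positivity

/-- representation of a slice function away from the real axis -/
lemma slice_rep {Ω : Set (Pt n)} (hax : AxSymm Ω) {f : Pt n → Cl n} {F0 F1 : ℝ × ℝ → Cl n}
    (hsl : ∀ p ∈ sliceDom Ω, ∀ J ∈ unitSphere n, f (ptOf p.1 p.2 J) = F0 p + im J * F1 p)
    {y : Pt n} (hy : y ∈ Ω) (h0 : 0 < normSqIm y) :
    f y = F0 (y 0, Real.sqrt (normSqIm y)) +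
      (Real.sqrt (normSqIm y))⁻¹ •
        (im y * F1 (y 0, Real.sqrt (normSqIm y))) := by
  set s := Real.sqrt (normSqIm y) with hs
  have hs0 : 0 < s := Real.sqrt_pos.mpr h0
  have hs2 : s ^ 2 = normSqIm y := Real.sq_sqrt h0.le
  set J : Pt n := fun t => if t = 0 then 0 else y t / s with hJdef
  have hJs : ∀ i : Fin n, J i.succ = y i.succ / s := fun i => by
    simp [hJdef, Fin.succ_ne_zero i]
  have hJ : J ∈ unitSphere n := by
    constructor
    · simp [hJdef]
    · show (∑ i : Fin n, (J i.succ) ^ 2) = 1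
      rw [Finset.sum_congr rfl fun i _ => by rw [hJs i, div_pow], ← Finset.sum_div, hs2]
      exact div_self (ne_of_gt h0)
  have hpd : (y 0, s) ∈ sliceDom Ω := by rw [hs]; exact mem_sliceDom hax hy
  have hpt : ptOf (y 0) s J = y := by
    funext t
    by_cases ht : t = 0
    · subst ht; simp [ptOf, hJdef]
    · simp only [ptOf, if_neg ht, hJdef, if_neg ht]
      rw [mul_div_cancel₀ _ hs0.ne']
      ring
  have him : im J = s⁻¹ • im y := by
    rw [im_apply, im_apply, Finset.smul_sum]
    refine Finset.sum_congr rfl fun i _ => ?_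
    rw [hJs i, div_eq_inv_mul, mul_smul]
  have := hsl (y 0, s) hpd J hJ
  rw [hpt] at this
  rw [this, him, smul_mul_assoc]

end Aux2

section Core
variable {n : ℕ}

lemma refl_zero (j : Fin n) (x : Pt n) : refl j x 0 = x 0 := by
  simp [refl, (Fin.succ_ne_zero j).symm]

lemma refl_succ (j i : Fin n) (x : Pt n) :
    refl j x i.succ = if i = j then -(x i.succ) else x i.succ := by
  simp [refl, Fin.succ_inj]

lemma normSqIm_refl (j : Fin n) (x : Pt n) : normSqIm (refl j x) = normSqIm x := by
  unfold normSqIm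
  refine Finset.sum_congr rfl fun i _ => ?_
  rw [refl_succ]
  by_cases h : i = j <;> simp [h]

lemma im_refl (j : Fin n) (x : Pt n) :
    im (refl j x) = im x - (2 * x j.succ) • gen j := by
  have hterm : ∀ i : Fin n, refl j x i.succ • gen i
      = x i.succ • gen i - (if i = j then (2 * x j.succ) • gen j else (0 : Cl n)) := by
    intro i
    rw [refl_succ]
    by_cases h : i = j
    · subst h
      rw [if_pos rfl, if_pos rfl, ← sub_smul]
      congr 1
      ring
    · simp [h]
  rw [im_apply, im_apply, Finset.sum_congr rfl fun i _ => hterm i, Finset.sum_sub_distrib]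
  congr 1
  simp

lemma conj_zero (x : Pt n) : conj x 0 = x 0 := by simp [conj]

lemma conj_succ (x : Pt n) (i : Fin n) : conj x i.succ = -(x i.succ) := by
  simp [conj, Fin.succ_ne_zero i]

lemma normSqIm_conj (x : Pt n) : normSqIm (conj x) = normSqIm x := by
  unfold normSqIm
  exact Finset.sum_congr rfl fun i _ => by rw [conj_succ]; ring

lemma im_conj (x : Pt n) : im (conj x) = -im x := by
  rw [im_apply, im_apply, ← Finset.sum_neg_distrib]
  exact Finset.sum_congr rfl fun i _ => by rw [conj_succ, neg_smul]

lemma single_succ_succ (j i : Fin n) :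
    (Pi.single j.succ (1:ℝ) : Pt n) i.succ = if i = j then 1 else 0 := by
  rw [Pi.single_apply]
  simp [Fin.succ_inj]

lemma single_succ_zero (j : Fin n) : (Pi.single j.succ (1:ℝ) : Pt n) 0 = 0 :=
  Pi.single_eq_of_ne (Fin.succ_ne_zero j).symm 1

lemma clm_pair_eq (A : ℝ × ℝ →L[ℝ] Cl n) (s t : ℝ) :
    A (s, t) = s • A (1, 0) + t • A (0, 1) := by
  have h : ((s, t) : ℝ × ℝ) = s • ((1:ℝ), (0:ℝ)) + t • ((0:ℝ), (1:ℝ)) := by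
    simp [Prod.ext_iff]
  rw [h, map_add, map_smul, map_smul]

lemma scas_core (hn : 1 ≤ n) (k : Fin n → ℝ)
    (hks : ∑ i : Fin n, k i = (1 - (n : ℝ)) / 2)
    {Ω : Set (Pt n)} (hopen : IsOpen Ω) (hax : AxSymm Ω)
    (f : Pt n → Cl n) (F0 F1 : ℝ × ℝ → Cl n)
    (hF0 : ContDiffOn ℝ 1 F0 (sliceDom Ω)) (hF1 : ContDiffOn ℝ 1 F1 (sliceDom Ω))
    (hrep : ∀ y ∈ Ω, 0 < normSqIm y →
      f y = F0 (y 0, Real.sqrt (normSqIm y)) +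
        (Real.sqrt (normSqIm y))⁻¹ • (im y * F1 (y 0, Real.sqrt (normSqIm y))))
    (x : Pt n) (hx : x ∈ Ω) (hnz : allNZ x) : scas k f x = 0 := by
  classical
  -- positivity of the squared norm
  have hq0 : 0 < normSqIm x := by
    unfold normSqIm
    refine Finset.sum_pos' (fun i _ => sq_nonneg _) ⟨⟨0, hn⟩, Finset.mem_univ _, ?_⟩
    exact lt_of_le_of_ne (sq_nonneg _) (Ne.symm (pow_ne_zero 2 (hnz _)))
  set b : ℝ := Real.sqrt (normSqIm x) with hbdef
  have hb : 0 < b := Real.sqrt_pos.mpr hq0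
  have hb2 : b ^ 2 = normSqIm x := Real.sq_sqrt hq0.le
  set p : ℝ × ℝ := (x 0, b) with hpdef
  have hsd : IsOpen (sliceDom Ω) := sliceDom_isOpen hn hopen hax
  have hp : p ∈ sliceDom Ω := mem_sliceDom hax hx
  have hA0 : HasFDerivAt F0 (fderiv ℝ F0 p) p :=
    ((hF0.differentiableOn one_ne_zero).differentiableAt (hsd.mem_nhds hp)).hasFDerivAt
  have hA1 : HasFDerivAt F1 (fderiv ℝ F1 p) p :=
    ((hF1.differentiableOn one_ne_zero).differentiableAt (hsd.mem_nhds hp)).hasFDerivAt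
  -- derivative of the squared norm
  set Lq : Pt n →L[ℝ] ℝ := ∑ i : Fin n,
    (x i.succ • ContinuousLinearMap.proj i.succ + x i.succ • ContinuousLinearMap.proj i.succ)
    with hLqdef
  have hpi : ∀ i : Fin n, HasFDerivAt (fun y : Pt n => y i.succ)
      (ContinuousLinearMap.proj (R := ℝ) (φ := fun _ : Fin (n+1) => ℝ) i.succ) x :=
    fun i => by exact (ContinuousLinearMap.proj (R := ℝ) (φ := fun _ : Fin (n+1) => ℝ)
      i.succ).hasFDerivAt (x := x)
  have hq : HasFDerivAt (fun y : Pt n => normSqIm y) Lq x := by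
    have hq' : HasFDerivAt (fun y : Pt n => ∑ i : Fin n, y i.succ * y i.succ) Lq x :=
      HasFDerivAt.fun_sum fun i _ => (hpi i).mul (hpi i)
    have hnq : (fun y : Pt n => normSqIm y) = fun y : Pt n => ∑ i : Fin n, y i.succ * y i.succ := by
      funext y
      exact Finset.sum_congr rfl fun i _ => sq (y i.succ)
    rw [hnq]
    exact hq'
  have hbeta : HasFDerivAt (fun y : Pt n => Real.sqrt (normSqIm y)) ((1 / (2 * b)) • Lq) x :=
    (Real.hasDerivAt_sqrt (ne_of_gt hq0)).comp_hasFDerivAt x hq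
  have hbinv : HasFDerivAt (fun y : Pt n => (Real.sqrt (normSqIm y))⁻¹)
      (-(b ^ 2)⁻¹ • ((1 / (2 * b)) • Lq)) x :=
    (hasDerivAt_inv hb.ne').comp_hasFDerivAt x hbeta
  have hφ : HasFDerivAt (fun y : Pt n => ((y 0, Real.sqrt (normSqIm y)) : ℝ × ℝ))
      ((ContinuousLinearMap.proj (R := ℝ) (φ := fun _ : Fin (n+1) => ℝ) 0).prod
        ((1 / (2 * b)) • Lq)) x :=
    HasFDerivAt.prodMk (by exact (ContinuousLinearMap.proj (R := ℝ)
      (φ := fun _ : Fin (n+1) => ℝ) 0).hasFDerivAt (x := x)) hbeta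
  have hF0φ := hA0.comp x hφ
  have hF1φ := hA1.comp x hφ
  have hc := ((mulCLM (n := n)).comp imCLM).hasFDerivAt (x := x)
  have hmulF := HasFDerivAt.clm_apply hc hF1φ
  have hsm := HasFDerivAt.smul hbinv hmulF
  have hG := HasFDerivAt.add hF0φ hsm
  -- f agrees with the slice representation near x
  have hU : IsOpen (Ω ∩ {y : Pt n | 0 < normSqIm y}) :=
    hopen.inter (isOpen_lt continuous_const continuous_normSqIm)
  have hfeq : f =ᶠ[nhds x] (fun z : Pt n =>
      (F0 ∘ fun y : Pt n => (y 0, Real.sqrt (normSqIm y))) z +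
        (Real.sqrt (normSqIm z))⁻¹ • ((mulCLM.comp imCLM) z)
          ((F1 ∘ fun y : Pt n => (y 0, Real.sqrt (normSqIm y))) z)) := by
    filter_upwards [hU.mem_nhds ⟨hx, hq0⟩] with y hy
    rw [hrep y hy.1 hy.2]
    simp [Function.comp, mulCLM_apply, imCLM_apply]
  have hfL := hG.congr_of_eventuallyEq hfeq
  -- the partial derivatives
  set c1 : Cl n := F1 p with hc1def
  set w : Cl n := b⁻¹ • (fderiv ℝ F0 p (0, 1))
      + (b⁻¹ * b⁻¹) • (im x * fderiv ℝ F1 p (0, 1))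
      + (-(b ^ 2)⁻¹ * b⁻¹) • (im x * c1) with hwdef
  have hpdj : ∀ j : Fin n, pd j.succ f x = x j.succ • w + b⁻¹ • (gen j * c1) := by
    intro j
    show fderiv ℝ f x (Pi.single j.succ 1) = _
    rw [hfL.fderiv]
    simp only [ContinuousLinearMap.add_apply, ContinuousLinearMap.comp_apply,
      ContinuousLinearMap.coe_smul', Pi.smul_apply, ContinuousLinearMap.prod_apply,
      ContinuousLinearMap.smulRight_apply, ContinuousLinearMap.flip_apply,
      ContinuousLinearMap.proj_apply, ContinuousLinearMap.coe_sum', Finset.sum_apply,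
      single_succ_succ, single_succ_zero, mulCLM_apply, imCLM_apply, smul_eq_mul,
      mul_ite, mul_one, mul_zero, Finset.sum_ite_eq', Finset.mem_univ, if_pos]
    have hLqj : Lq (Pi.single j.succ 1) = 2 * x j.succ := by
      rw [hLqdef]
      simp only [ContinuousLinearMap.coe_sum', Finset.sum_apply,
        ContinuousLinearMap.add_apply, ContinuousLinearMap.coe_smul', Pi.smul_apply,
        ContinuousLinearMap.proj_apply, single_succ_succ, smul_eq_mul, mul_ite, mul_one,
        mul_zero]
      rw [Finset.sum_add_distrib]
      simp
      ring
    have him_single : im (Pi.single j.succ (1:ℝ) : Pt n) = gen j := by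
      rw [im_apply]
      simp [single_succ_succ, ite_smul]
    rw [hLqj, him_single]
    simp only [Function.comp_apply]
    rw [← hbdef, ← hpdef, ← hc1def]
    rw [clm_pair_eq (fderiv ℝ F0 p), clm_pair_eq (fderiv ℝ F1 p)]
    simp only [zero_smul, zero_add, hwdef]
    simp only [mul_add, mul_smul_comm, smul_add, smul_smul]
    match_scalars <;> field_simp <;> ring
  -- values of f at x and at reflected points
  have hfx : f x = F0 p + b⁻¹ • (im x * c1) := by
    have h := hrep x hx hq0
    rw [← hbdef, ← hpdef, ← hc1def] at h
    exact h
  have hfrefl : ∀ j : Fin n, f (refl j x) = F0 p + b⁻¹ • (im (refl j x) * c1) := by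
    intro j
    have hmem : refl j x ∈ Ω := hax x hx _ (refl_zero j x) (normSqIm_refl j x)
    have h0' : 0 < normSqIm (refl j x) := by rw [normSqIm_refl]; exact hq0
    have h := hrep _ hmem h0'
    rw [normSqIm_refl, refl_zero, ← hbdef, ← hpdef, ← hc1def] at h
    exact h
  have hTj : ∀ j : Fin n, T k j f x
      = x j.succ • w + b⁻¹ • (gen j * c1) + (2 * k j / b) • (gen j * c1) := by
    intro j
    have hdiff : f x - f (refl j x) = (b⁻¹ * (2 * x j.succ)) • (gen j * c1) := by
      rw [hfx, hfrefl j, im_refl, sub_mul, smul_mul_assoc]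
      module
    show pd j.succ f x + (k j / x j.succ) • (f x - f (refl j x)) = _
    rw [hpdj j, hdiff, smul_smul]
    rw [show k j / x j.succ * (b⁻¹ * (2 * x j.succ)) = 2 * k j / b by
      field_simp [hnz j]]
  have hgg : ∀ (j : Fin n) (c : Cl n), gen j * (gen j * c) = -c := by
    intro j c
    rw [← mul_assoc, gen_sq, neg_one_mul]
  have hsum1 : ∀ c : Cl n, (∑ j : Fin n, x j.succ • (gen j * c)) = im x * c := by
    intro c
    rw [im_apply, Finset.sum_mul]
    exact Finset.sum_congr rfl fun j _ => (smul_mul_assoc _ _ _).symm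
  have hcoef : (∑ j : Fin n, (b⁻¹ + 2 * k j / b)) = b⁻¹ := by
    rw [Finset.sum_add_distrib, Finset.sum_const, Finset.card_univ, Fintype.card_fin,
      nsmul_eq_mul]
    rw [show (∑ j : Fin n, 2 * k j / b) = (∑ j : Fin n, k j) * (2 / b) by
      rw [Finset.sum_mul]; exact Finset.sum_congr rfl fun j _ => by ring]
    rw [hks]
    field_simp
    ring
  have hDD : dunklDirac k f x = im x * w - b⁻¹ • c1 := by
    show (∑ j : Fin n, gen j * T k j f x) = _
    have hterm : ∀ j : Fin n, gen j * T k j f x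
        = x j.succ • (gen j * w) - (b⁻¹ + 2 * k j / b) • c1 := by
      intro j
      rw [hTj j]
      simp only [mul_add, mul_smul_comm, hgg]
      module
    rw [Finset.sum_congr rfl fun j _ => hterm j, Finset.sum_sub_distrib, hsum1,
      ← Finset.sum_smul, hcoef]
  have heuler : euler f x = normSqIm x • w + b⁻¹ • (im x * c1) := by
    show (∑ j : Fin n, x j.succ • pd j.succ f x) = _
    have hterm : ∀ j : Fin n, x j.succ • pd j.succ f x
        = (x j.succ ^ 2) • w + b⁻¹ • (x j.succ • (gen j * c1)) := by
      intro j
      rw [hpdj j, smul_add, smul_smul, smul_comm (x j.succ) b⁻¹, ← sq]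
    rw [Finset.sum_congr rfl fun j _ => hterm j, Finset.sum_add_distrib, ← Finset.sum_smul,
      ← Finset.smul_sum, hsum1]
    rw [show (∑ j : Fin n, x j.succ ^ 2) = normSqIm x from rfl]
  show im x * dunklDirac k f x + euler f x = 0
  rw [hDD, heuler, mul_sub]
  rw [show im x * (im x * w) = (-(normSqIm x)) • w by
    rw [← mul_assoc, im_mul_im, ← Algebra.smul_def]]
  rw [mul_smul_comm]
  module


end Core

end Dunkl

open Dunkl

/-- If `Σ k_i = (1−n)/2` and `f` is a `C¹` slice function on an open axially
symmetric set `Ω`, then `S̲f = 0` and `S̲(f∘c) = 0` at every point of `Ω` with all of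
`x_1, …, x_n` nonzero. -/
theorem statement7 (n : ℕ) (hn : 1 ≤ n) (k : Fin n → ℝ)
    (hks : ∑ i : Fin n, k i = (1 - (n : ℝ)) / 2) (Ω : Set (Pt n)) (hopen : IsOpen Ω)
    (hax : AxSymm Ω) (f : Pt n → Cl n) (hf : IsSliceC1 Ω f) :
    ∀ x ∈ Ω, allNZ x →
      scas k f x = 0 ∧ scas k (fun y => f (conj y)) x = 0 := by
  obtain ⟨F0, F1, hF0, hF1, -, -, hsl⟩ := hf
  intro x hx hnz
  constructor
  · exact scas_core hn k hks hopen hax f F0 F1 hF0 hF1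
      (fun y hy h0 => slice_rep hax hsl hy h0) x hx hnz
  · refine scas_core hn k hks hopen hax _ F0 (fun q => -F1 q) hF0 hF1.neg ?_ x hx hnz
    intro y hy h0
    have hcy : conj y ∈ Ω := hax y hy _ (conj_zero y) (normSqIm_conj y)
    have h0' : 0 < normSqIm (conj y) := by rw [normSqIm_conj]; exact h0
    have h := slice_rep hax hsl hcy h0'
    rw [normSqIm_conj, conj_zero, im_conj] at h
    show f (conj y) = _
    rw [h]
    simp [neg_mul, mul_neg]
end
end

section
/- Let n ≥ 2 and let k_1,…,k_n ≤ 0 be real numbers with at most one k_i equal to 0. Let Ω ⊆ ℝ^{n+1} be open and invariant under every reflection r_i, and let g : Ω → ℝ_n be continuous with g(x) = g(x^c) for every x ∈ Ω, where x ↦ x^c equals r_1∘⋯∘r_n on ℝ^{n+1}. If Σ_{i=1}^n k_i·(g(x) − g(r_i x)) = 0 for every x ∈ Ω, then g(x) = g(r_i x) for every x ∈ Ω and every i = 1,…,n, i.e. g is ℤ₂ⁿ-invariant. -/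
noncomputable section

open scoped BigOperators

open Dunkl

namespace Statement10Aux
open Dunkl

variable {n : ℕ}

def sgn (b : Bool) : ℝ := if b then -1 else 1

lemma sgn_not (b : Bool) : sgn (!b) = -sgn b := by cases b <;> simp [sgn]

def act (ε : Fin n → Bool) (x : Pt n) : Pt n :=
  fun t => Fin.cases (x 0) (fun j => sgn (ε j) * x j.succ) t

lemma act_zero (ε : Fin n → Bool) (x : Pt n) : act ε x 0 = x 0 := rfl

lemma act_succ (ε : Fin n → Bool) (x : Pt n) (j : Fin n) :
    act ε x j.succ = sgn (ε j) * x j.succ := by simp [act]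

def flp (i : Fin n) (ε : Fin n → Bool) : Fin n → Bool := Function.update ε i (!ε i)

lemma flip_self (i : Fin n) (ε : Fin n → Bool) : flp i ε i = !ε i := by
  simp [flp]

lemma flip_other {i j : Fin n} (h : j ≠ i) (ε : Fin n → Bool) : flp i ε j = ε j := by
  simp [flp, Function.update_of_ne h]

lemma flip_flip (i : Fin n) (ε : Fin n → Bool) : flp i (flp i ε) = ε := by
  funext j
  by_cases h : j = i
  · subst h; simp [flp]
  · rw [flip_other h, flip_other h]

lemma flip_involutive (i : Fin n) : Function.Involutive (flp (n := n) i) :=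
  fun ε => flip_flip i ε

lemma refl_act (i : Fin n) (ε : Fin n → Bool) (x : Pt n) :
    refl i (act ε x) = act (flp i ε) x := by
  funext t
  refine Fin.cases ?_ (fun m => ?_) t
  · have h0 : (0 : Fin (n+1)) ≠ i.succ := (Fin.succ_ne_zero i).symm
    simp [Dunkl.refl, h0, act_zero]
  · by_cases hm : m = i
    · subst hm
      simp only [Dunkl.refl, if_pos rfl, act_succ, flip_self]
      cases ε m <;> simp [sgn]
    · have h1 : m.succ ≠ i.succ := fun h => hm (Fin.succ_injective _ h)
      simp only [Dunkl.refl, if_neg h1, act_succ, flip_other hm]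

lemma conj_act (ε : Fin n → Bool) (x : Pt n) :
    conj (act ε x) = act (fun j => !ε j) x := by
  funext t
  refine Fin.cases ?_ (fun m => ?_) t
  · simp [conj, act_zero]
  · have h1 : (m.succ : Fin (n+1)) ≠ 0 := Fin.succ_ne_zero m
    simp only [conj, if_neg h1, act_succ, sgn_not]
    ring

lemma act_false (x : Pt n) : act (fun _ => false) x = x := by
  funext t
  refine Fin.cases ?_ (fun m => ?_) t
  · rfl
  · simp [act_succ, sgn]

lemma act_mem {Ω : Set (Pt n)} (hinv : ReflInv Ω) (s : Finset (Fin n)) :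
    ∀ ε : Fin n → Bool, (∀ j, ε j = true → j ∈ s) → ∀ x ∈ Ω, act ε x ∈ Ω := by
  classical
  induction s using Finset.induction with
  | empty =>
    intro ε hε x hx
    have : ε = fun _ => false := by
      funext j; cases hj : ε j
      · rfl
      · exact absurd (hε j hj) (Finset.notMem_empty j)
    rw [this, act_false]; exact hx
  | @insert a s ha ih =>
    intro ε hε x hx
    by_cases hεa : ε a = true
    · have hsup : ∀ j, flp a ε j = true → j ∈ s := by
        intro j hj
        by_cases hja : j = a
        · subst hja; rw [flip_self, hεa] at hj; simp at hj
        · rw [flip_other hja] at hj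
          rcases Finset.mem_insert.mp (hε j hj) with h | h
          · exact absurd h hja
          · exact h
      have hmem : act (flp a ε) x ∈ Ω := ih (flp a ε) hsup x hx
      have : refl a (act (flp a ε) x) ∈ Ω := hinv a _ hmem
      rwa [refl_act, flip_flip] at this
    · have hsup : ∀ j, ε j = true → j ∈ s := by
        intro j hj
        rcases Finset.mem_insert.mp (hε j hj) with h | h
        · subst h; exact absurd hj hεa
        · exact h
      exact ih ε hsup x hx

def chi (S : Finset (Fin n)) (ε : Fin n → Bool) : ℝ := ∏ j ∈ S, sgn (ε j)

lemma chi_flip (S : Finset (Fin n)) (i : Fin n) (ε : Fin n → Bool) :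
    chi S (flp i ε) = (if i ∈ S then -1 else 1) * chi S ε := by
  classical
  by_cases hi : i ∈ S
  · rw [if_pos hi]
    rw [chi, chi, ← Finset.mul_prod_erase S _ hi, ← Finset.mul_prod_erase S _ hi]
    have h1 : ∏ j ∈ S.erase i, sgn (flp i ε j) = ∏ j ∈ S.erase i, sgn (ε j) :=
      Finset.prod_congr rfl fun j hj => by rw [flip_other (Finset.ne_of_mem_erase hj)]
    rw [h1, flip_self, sgn_not]; ring
  · rw [if_neg hi, one_mul]
    exact Finset.prod_congr rfl fun j hj => by
      rw [flip_other (by rintro rfl; exact hi hj)]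

lemma chi_not (S : Finset (Fin n)) (ε : Fin n → Bool) :
    chi S (fun j => !ε j) = (-1) ^ S.card * chi S ε := by
  classical
  rw [chi, chi]
  calc ∏ j ∈ S, sgn (!ε j) = ∏ j ∈ S, (-1) * sgn (ε j) :=
        Finset.prod_congr rfl fun j _ => by rw [sgn_not]; ring
    _ = (-1) ^ S.card * ∏ j ∈ S, sgn (ε j) := by
        rw [Finset.prod_mul_distrib, Finset.prod_const]

lemma chi_orth (ε η : Fin n → Bool) :
    ∑ S : Finset (Fin n), chi S ε * chi S η = if ε = η then (2:ℝ)^n else 0 := by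
  classical
  have h1 : ∀ S : Finset (Fin n), chi S ε * chi S η = ∏ j ∈ S, (sgn (ε j) * sgn (η j)) := by
    intro S; rw [chi, chi, Finset.prod_mul_distrib]
  simp only [h1]
  have h2 : ∑ S : Finset (Fin n), ∏ j ∈ S, (sgn (ε j) * sgn (η j))
      = ∏ j : Fin n, (sgn (ε j) * sgn (η j) + 1) := by
    rw [Finset.prod_add]
    rw [← Finset.powerset_univ]
    exact Finset.sum_congr rfl fun t _ => by simp
  rw [h2]
  by_cases h : ε = η
  · subst h
    rw [if_pos rfl]
    have h3 : ∀ j : Fin n, sgn (ε j) * sgn (ε j) + 1 = 2 := by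
      intro j; cases ε j <;> simp [sgn] <;> norm_num
    rw [Finset.prod_congr rfl fun j _ => h3 j, Finset.prod_const]
    simp
  · rw [if_neg h]
    obtain ⟨j, hj⟩ : ∃ j, ε j ≠ η j := by
      by_contra hc
      push_neg at hc
      exact h (funext hc)
    apply Finset.prod_eq_zero (Finset.mem_univ j)
    cases hε : ε j <;> cases hη : η j <;> simp [hε, hη] at hj ⊢ <;> simp [sgn]

lemma notnot_involutive : Function.Involutive (fun ε : Fin n → Bool => fun j => !ε j) :=
  fun ε => by funext j; simp

end Statement10Aux

open Statement10Aux

/-- Let `n ≥ 2` and `k_1, …, k_n ≤ 0` with at most one `k_i = 0`. If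
`g : Ω → ℝ_n` is continuous, invariant under the conjugation `x ↦ x^c`, and satisfies
`Σ k_i (g − g∘r_i) = 0`, then `g` is `ℤ₂ⁿ`-invariant. -/
theorem statement10 (n : ℕ) (hn : 2 ≤ n) (k : Fin n → ℝ) (hk0 : ∀ i, k i ≤ 0)
    (hk1 : ∀ i j, k i = 0 → k j = 0 → i = j) (Ω : Set (Pt n)) (hopen : IsOpen Ω)
    (hinv : ReflInv Ω) (g : Pt n → Cl n) (hg : ContinuousOn g Ω)
    (hconj : ∀ x ∈ Ω, g x = g (conj x))
    (hS : ∀ x ∈ Ω, ∑ i : Fin n, k i • (g x - g (refl i x)) = 0) :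
    ∀ x ∈ Ω, ∀ i : Fin n, g x = g (refl i x) := by
  classical
  intro x hx i
  have hmem : ∀ ε : Fin n → Bool, act ε x ∈ Ω := fun ε =>
    act_mem hinv Finset.univ ε (fun j _ => Finset.mem_univ j) x hx
  set F : (Fin n → Bool) → Cl n := fun ε => g (act ε x) with hF
  set G : Finset (Fin n) → Cl n := fun S => ∑ ε : Fin n → Bool, chi S ε • F ε with hG
  have hSum : ∀ ε : Fin n → Bool, ∑ j : Fin n, k j • (F ε - F (flp j ε)) = 0 := by
    intro ε
    have h := hS (act ε x) (hmem ε)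
    simp only [refl_act] at h
    exact h
  have hconjF : ∀ ε : Fin n → Bool, F (fun j => !ε j) = F ε := by
    intro ε
    have h := hconj (act ε x) (hmem ε)
    rw [conj_act] at h
    exact h.symm
  have hflipsum : ∀ (S : Finset (Fin n)) (j : Fin n),
      ∑ ε : Fin n → Bool, chi S ε • F (flp j ε)
        = (if j ∈ S then (-1:ℝ) else 1) • G S := by
    intro S j
    have h1 : ∑ ε : Fin n → Bool, chi S ε • F (flp j ε)
        = ∑ ε : Fin n → Bool, chi S (flp j ε) • F ε :=
      Fintype.sum_bijective (flp j) (flip_involutive j).bijective _ _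
        (fun ε => by rw [Statement10Aux.flip_flip])
    calc ∑ ε : Fin n → Bool, chi S ε • F (flp j ε)
        = ∑ ε : Fin n → Bool, chi S (flp j ε) • F ε := h1
      _ = ∑ ε : Fin n → Bool, (if j ∈ S then (-1:ℝ) else 1) • (chi S ε • F ε) := by
          refine Finset.sum_congr rfl fun ε _ => ?_
          rw [chi_flip, mul_smul]
      _ = (if j ∈ S then (-1:ℝ) else 1) • G S := by
          rw [← Finset.smul_sum, hG]
  have key1 : ∀ S : Finset (Fin n), (∑ j ∈ S, k j) ≠ 0 → G S = 0 := by
    intro S hsum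
    have h0 : ∑ ε : Fin n → Bool, chi S ε • (∑ j : Fin n, k j • (F ε - F (flp j ε))) = 0 :=
      Finset.sum_eq_zero fun ε _ => by rw [hSum ε, smul_zero]
    have h1 : ∑ ε : Fin n → Bool, chi S ε • (∑ j : Fin n, k j • (F ε - F (flp j ε)))
        = ∑ j : Fin n, if j ∈ S then (2 * k j) • G S else 0 := by
      calc ∑ ε : Fin n → Bool, chi S ε • (∑ j : Fin n, k j • (F ε - F (flp j ε)))
          = ∑ ε : Fin n → Bool, ∑ j : Fin n, chi S ε • (k j • (F ε - F (flp j ε))) :=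
            Finset.sum_congr rfl fun ε _ => Finset.smul_sum
        _ = ∑ j : Fin n, ∑ ε : Fin n → Bool, chi S ε • (k j • (F ε - F (flp j ε))) :=
            Finset.sum_comm
        _ = ∑ j : Fin n, if j ∈ S then (2 * k j) • G S else 0 := by
            refine Finset.sum_congr rfl fun j _ => ?_
            have h2 : ∑ ε : Fin n → Bool, chi S ε • (k j • (F ε - F (flp j ε)))
                = k j • (G S - (if j ∈ S then (-1:ℝ) else 1) • G S) := by
              calc ∑ ε : Fin n → Bool, chi S ε • (k j • (F ε - F (flp j ε)))
                  = ∑ ε : Fin n → Bool, k j • (chi S ε • F ε - chi S ε • F (flp j ε)) := by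
                    refine Finset.sum_congr rfl fun ε _ => ?_
                    rw [smul_comm, smul_sub]
                _ = k j • (G S - (if j ∈ S then (-1:ℝ) else 1) • G S) := by
                    rw [← Finset.smul_sum, Finset.sum_sub_distrib, hflipsum S j, hG]
            rw [h2]
            by_cases hj : j ∈ S
            · rw [if_pos hj, if_pos hj, neg_smul, one_smul, sub_neg_eq_add,
                ← two_smul ℝ, smul_smul, mul_comm]
            · rw [if_neg hj, if_neg hj, one_smul, sub_self, smul_zero]
    have h3 : (∑ j ∈ S, 2 * k j) • G S = 0 := by
      rw [← h0, h1, Finset.sum_ite_mem, Finset.univ_inter, Finset.sum_smul]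
    rcases smul_eq_zero.mp h3 with h | h
    · exfalso
      apply hsum
      have : (2:ℝ) * ∑ j ∈ S, k j = 0 := by rw [Finset.mul_sum]; exact h
      linarith [this]
    · exact h
  have key2 : ∀ S : Finset (Fin n), Odd S.card → G S = 0 := by
    intro S hodd
    have h1 : ∑ ε : Fin n → Bool, chi S ε • F ε
        = ∑ ε : Fin n → Bool, chi S (fun j => !ε j) • F (fun j => !ε j) :=
      Fintype.sum_bijective (fun ε j => !ε j) (notnot_involutive (n := n)).bijective _ _
        (fun ε => by
          have : (fun j => !(!ε j)) = ε := funext fun j => Bool.not_not _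
          simp only [this])
    have hneg : G S = -G S := by
      calc G S = ∑ ε : Fin n → Bool, chi S (fun j => !ε j) • F (fun j => !ε j) := by
            rw [hG]; exact h1
        _ = ∑ ε : Fin n → Bool, (-1:ℝ) • (chi S ε • F ε) := by
            refine Finset.sum_congr rfl fun ε _ => ?_
            rw [hconjF, chi_not, hodd.neg_one_pow, mul_smul]
        _ = -G S := by
            rw [← Finset.smul_sum, hG, neg_one_smul]
    have h2 : (2:ℝ) • G S = 0 := by
      rw [two_smul]
      nth_rewrite 1 [hneg]
      exact neg_add_cancel _
    rcases smul_eq_zero.mp h2 with h | h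
    · norm_num at h
    · exact h
  have key3 : ∀ S : Finset (Fin n), S.Nonempty → G S = 0 := by
    intro S hSne
    by_cases hsum : (∑ j ∈ S, k j) = 0
    · have hall : ∀ j ∈ S, k j = 0 :=
        (Finset.sum_eq_zero_iff_of_nonpos (fun j _ => hk0 j)).mp hsum
      obtain ⟨a, ha⟩ := hSne
      have hsing : S = {a} := Finset.eq_singleton_iff_unique_mem.mpr
        ⟨ha, fun b hb => hk1 b a (hall b hb) (hall a ha)⟩
      exact key2 S (by rw [hsing, Finset.card_singleton]; exact odd_one)
    · exact key1 S hsum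
  -- Fourier inversion step
  set ε0 : Fin n → Bool := fun _ => false with hε0
  set η0 : Fin n → Bool := flp i ε0 with hη0
  have hne : ε0 ≠ η0 := by
    intro h
    have h2 := congrFun h i
    rw [hη0, flip_self] at h2
    simp [hε0] at h2
  have hident : ∑ S : Finset (Fin n), (chi S ε0 - chi S η0) • G S
      = (2:ℝ)^n • F ε0 - (2:ℝ)^n • F η0 := by
    have hdel : ∀ (δ : Fin n → Bool),
        ∑ ε : Fin n → Bool, (if δ = ε then (2:ℝ)^n else 0) • F ε = (2:ℝ)^n • F δ := by
      intro δ
      simp [ite_smul, Finset.sum_ite_eq]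
    calc ∑ S : Finset (Fin n), (chi S ε0 - chi S η0) • G S
        = ∑ S : Finset (Fin n), ∑ ε : Fin n → Bool,
            ((chi S ε0 - chi S η0) * chi S ε) • F ε := by
          refine Finset.sum_congr rfl fun S _ => ?_
          rw [hG, Finset.smul_sum]
          exact Finset.sum_congr rfl fun ε _ => smul_smul _ _ _
      _ = ∑ ε : Fin n → Bool, (∑ S : Finset (Fin n),
            ((chi S ε0 - chi S η0) * chi S ε)) • F ε := by
          rw [Finset.sum_comm]
          exact Finset.sum_congr rfl fun ε _ => (Finset.sum_smul).symm
      _ = ∑ ε : Fin n → Bool,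
            ((if ε0 = ε then (2:ℝ)^n else 0) - (if η0 = ε then (2:ℝ)^n else 0)) • F ε := by
          refine Finset.sum_congr rfl fun ε _ => ?_
          congr 1
          rw [← chi_orth ε0 ε, ← chi_orth η0 ε, ← Finset.sum_sub_distrib]
          exact Finset.sum_congr rfl fun S _ => by ring
      _ = (2:ℝ)^n • F ε0 - (2:ℝ)^n • F η0 := by
          simp only [sub_smul]
          rw [Finset.sum_sub_distrib, hdel ε0, hdel η0]
  have hzero : (2:ℝ)^n • F ε0 - (2:ℝ)^n • F η0 = 0 := by
    rw [← hident]
    refine Finset.sum_eq_zero fun S _ => ?_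
    rcases Finset.eq_empty_or_nonempty S with rfl | hSne
    · simp [chi]
    · rw [key3 S hSne, smul_zero]
  have hFeq : F ε0 = F η0 := by
    have h2n : ((2:ℝ)^n) ≠ 0 := by positivity
    have h := sub_eq_zero.mp hzero
    exact smul_right_injective (Cl n) h2n h
  have e1 : g x = F ε0 := by rw [hF]; simp only [hε0]; rw [act_false]
  have e2 : g (refl i x) = F η0 := by
    rw [hF, hη0]
    simp only
    rw [← refl_act]
    congr 1
    rw [hε0, act_false]
  rw [e1, e2, hFeq]
end
end

section
/- Let n ≥ 2, let Ω ⊆ ℝ^{n+1} be open and invariant under every reflection r_i, and let g : Ω → ℝ_n be of class C¹ with g∘r_i = g on Ω for every i = 1,…,n. If Γg = 0 on Ω, then for every x ∈ Ω with x̲ ≠ 0 the restriction of g to the set 𝕊_x ∩ Ω, where 𝕊_x = {(x_0, y̲) ∈ ℝ^{n+1} : ‖y̲‖ = ‖x̲‖}, is locally constant with respect to the subspace topology. -/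
noncomputable section

open scoped BigOperators

open Dunkl

/-! ### Auxiliary lemmas for Statement 11 -/

section St11Aux
variable {n : ℕ}

lemma gen_mul_self_left (i : Fin n) (w : Cl n) : gen i * (gen i * w) = -w := by
  rw [← mul_assoc, gen, CliffordAlgebra.ι_sq_scalar]
  have : Qneg n (Pi.single i 1) = -1 := by
    simp [Qneg, QuadraticMap.weightedSumSquares_apply, Pi.single_apply]
  rw [this, map_neg, map_one, neg_one_mul]

def reflL (i : Fin n) : Pt n →ₗ[ℝ] Pt n where
  toFun := Dunkl.refl i
  map_add' x y := by
    funext t; simp only [Dunkl.refl, Pi.add_apply]; split_ifs <;> ring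
  map_smul' c x := by
    funext t
    simp only [Dunkl.refl, Pi.smul_apply, smul_eq_mul, RingHom.id_apply]
    split_ifs <;> ring

def reflC (i : Fin n) : Pt n →L[ℝ] Pt n := (reflL i).toContinuousLinearMap

lemma reflC_apply (i : Fin n) (x : Pt n) : reflC i x = Dunkl.refl i x := rfl

lemma refl_single (i : Fin n) (t : Fin (n+1)) :
    Dunkl.refl i (Pi.single t 1) =
      (if t = i.succ then (-1:ℝ) else 1) • (Pi.single t 1 : Pt n) := by
  funext s
  simp only [Dunkl.refl, Pi.smul_apply, smul_eq_mul, Pi.single_apply]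
  by_cases h1 : s = i.succ <;> by_cases h2 : t = i.succ <;> by_cases h3 : s = t <;>
    simp [h1, h2, h3] <;> simp_all

lemma clm_sum_single (D : Pt n →L[ℝ] Cl n) (u : Pt n) :
    D u = ∑ t : Fin (n+1), u t • D (Pi.single t 1) := by
  have hu : u = ∑ t : Fin (n+1), u t • (Pi.single t 1 : Pt n) := by
    conv_lhs => rw [← Finset.univ_sum_single u]
    refine Finset.sum_congr rfl fun t _ => ?_
    funext s; simp [Pi.single_apply]
  conv_lhs => rw [hu]
  rw [map_sum]
  exact Finset.sum_congr rfl fun t _ => by rw [map_smul]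

/-- The angular momentum operator `L_{ij} f = x_i ∂_j f - x_j ∂_i f`. -/
def Lop (g : Pt n → Cl n) (i j : Fin n) (x : Pt n) : Cl n :=
  x i.succ • pd j.succ g x - x j.succ • pd i.succ g x

end St11Aux

section St11Key
variable {n : ℕ} {Ω : Set (Pt n)} {g : Pt n → Cl n}

lemma pd_refl (hopen : IsOpen Ω) (hinv : ReflInv Ω)
    (hg : ContDiffOn ℝ 1 g Ω) (hsym : ∀ i : Fin n, ∀ x ∈ Ω, g (refl i x) = g x)
    (i : Fin n) {y : Pt n} (hy : y ∈ Ω) (t : Fin (n+1)) :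
    pd t g (Dunkl.refl i y) = (if t = i.succ then (-1:ℝ) else 1) • pd t g y := by
  have hyi : Dunkl.refl i y ∈ Ω := hinv i y hy
  have hdy : DifferentiableAt ℝ g y :=
    (hg.contDiffAt (hopen.mem_nhds hy)).differentiableAt one_ne_zero
  have hdyi : DifferentiableAt ℝ g (Dunkl.refl i y) :=
    (hg.contDiffAt (hopen.mem_nhds hyi)).differentiableAt one_ne_zero
  have heq : (g ∘ reflC i) =ᶠ[nhds y] g := by
    filter_upwards [hopen.mem_nhds hy] with w hw
    exact hsym i w hw
  have hchain : fderiv ℝ (g ∘ reflC i) y =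
      (fderiv ℝ g (reflC i y)).comp (reflC i) := by
    rw [fderiv_comp (x := y) (by exact hdyi) (reflC i).differentiableAt,
      (reflC i).fderiv]
  have hmain : fderiv ℝ g y = (fderiv ℝ g (Dunkl.refl i y)).comp (reflC i) := by
    rw [← heq.fderiv_eq, hchain]; rfl
  have happ : pd t g y =
      (if t = i.succ then (-1:ℝ) else 1) • pd t g (Dunkl.refl i y) := by
    have := congrArg (fun (D : Pt n →L[ℝ] Cl n) => D (Pi.single t 1)) hmain
    simp only [ContinuousLinearMap.comp_apply] at this
    rw [pd]
    rw [this, reflC_apply, refl_single, map_smul]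
    rfl
  by_cases ht : t = i.succ
  · simp only [ht, if_pos rfl] at happ ⊢
    rw [happ]; simp
  · simpa [ht] using happ.symm

lemma Lop_refl (hopen : IsOpen Ω) (hinv : ReflInv Ω)
    (hg : ContDiffOn ℝ 1 g Ω) (hsym : ∀ i : Fin n, ∀ x ∈ Ω, g (refl i x) = g x)
    (i k l : Fin n) {y : Pt n} (hy : y ∈ Ω) :
    Lop g k l (Dunkl.refl i y) =
      ((if k = i then (-1:ℝ) else 1) * (if l = i then -1 else 1)) • Lop g k l y := by
  have hrk : Dunkl.refl i y k.succ = (if k = i then (-1:ℝ) else 1) * y k.succ := by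
    simp only [Dunkl.refl, Fin.succ_inj]; split_ifs <;> ring
  have hrl : Dunkl.refl i y l.succ = (if l = i then (-1:ℝ) else 1) * y l.succ := by
    simp only [Dunkl.refl, Fin.succ_inj]; split_ifs <;> ring
  have hpk := pd_refl hopen hinv hg hsym i hy k.succ
  have hpl := pd_refl hopen hinv hg hsym i hy l.succ
  simp only [Fin.succ_inj] at hpk hpl
  unfold Lop
  rw [hrk, hrl, hpk, hpl]
  split_ifs <;> simp [smul_smul, smul_sub]

end St11Key
section St11Key2
variable {n : ℕ} {Ω : Set (Pt n)} {g : Pt n → Cl n}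

lemma Lop_eq_zero_of_lt (hopen : IsOpen Ω) (hinv : ReflInv Ω)
    (hg : ContDiffOn ℝ 1 g Ω) (hsym : ∀ i : Fin n, ∀ x ∈ Ω, g (refl i x) = g x)
    (hGamma : ∀ x ∈ Ω, sphDirac g x = 0)
    {i j : Fin n} (hij : i < j) {y : Pt n} (hy : y ∈ Ω) :
    Lop g i j y = 0 := by
  classical
  set F : Pt n → Cl n := fun w => ∑ k : Fin n, ∑ l : Fin n,
    if k < l then gen k * (gen l * Lop g k l w) else 0 with hF
  have hF0 : ∀ w ∈ Ω, F w = 0 := by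
    intro w hw
    have := hGamma w hw
    have hsd : sphDirac g w = -F w := by
      simp only [sphDirac, hF, Lop, pd]
    rw [hsd] at this
    exact neg_eq_zero.mp this
  have hyi : Dunkl.refl i y ∈ Ω := hinv i y hy
  have hyj : Dunkl.refl j y ∈ Ω := hinv j y hy
  have hyij : Dunkl.refl i (Dunkl.refl j y) ∈ Ω := hinv i _ hyj
  have hne : i ≠ j := ne_of_lt hij
  have hterm : ∀ k l : Fin n,
      ((if k < l then gen k * (gen l * Lop g k l y) else 0)
        - (if k < l then gen k * (gen l * Lop g k l (Dunkl.refl i y)) else 0))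
        - ((if k < l then gen k * (gen l * Lop g k l (Dunkl.refl j y)) else 0)
        - (if k < l then gen k * (gen l * Lop g k l (Dunkl.refl i (Dunkl.refl j y))) else 0))
      = if k = i then (if l = j then (4:ℝ) • (gen i * (gen j * Lop g i j y)) else 0) else 0 := by
    intro k l
    by_cases hkl : k < l
    · have hLi := Lop_refl hopen hinv hg hsym i k l hy
      have hLj := Lop_refl hopen hinv hg hsym j k l hy
      have hLij := Lop_refl hopen hinv hg hsym i k l hyj
      rw [hLj] at hLij
      set c1 : ℝ := (if k = i then (-1:ℝ) else 1) * (if l = i then -1 else 1) with hc1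
      set c2 : ℝ := (if k = j then (-1:ℝ) else 1) * (if l = j then -1 else 1) with hc2
      rw [if_pos hkl, if_pos hkl, if_pos hkl, if_pos hkl, hLi, hLj, hLij]
      by_cases h1 : k = i ∨ l = i
      · by_cases h2 : k = j ∨ l = j
        · have hki : k = i ∧ l = j := by
            rcases h1 with h1 | h1 <;> rcases h2 with h2 | h2
            · exact absurd (h1.symm.trans h2) hne
            · exact ⟨h1, h2⟩
            · exfalso; rw [h1, h2] at hkl; exact absurd hkl (not_lt.mpr hij.le)
            · exact absurd (h1.symm.trans h2) hne
          obtain ⟨hk, hl⟩ := hki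
          subst hk; subst hl
          have e1 : c1 = -1 := by
            rw [hc1, if_pos rfl, if_neg (fun h => hne h.symm)]; ring
          have e2 : c2 = -1 := by
            rw [hc2, if_neg (fun h => hne h), if_pos rfl]; ring
          rw [e1, e2, if_pos rfl, if_pos rfl]
          simp only [neg_smul, one_smul, neg_neg, mul_neg]
          module
        · push_neg at h2
          have e2 : c2 = 1 := by rw [hc2, if_neg h2.1, if_neg h2.2]; ring
          have hrhs : (if k = i then (if l = j then (4:ℝ) • (gen i * (gen j * Lop g i j y)) else 0) else 0) = 0 := by
            rw [if_neg h2.2, ite_self]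
          rw [hrhs, e2]
          simp only [one_smul, sub_self]
      · push_neg at h1
        have e1 : c1 = 1 := by rw [hc1, if_neg h1.1, if_neg h1.2]; ring
        have hrhs : (if k = i then (if l = j then (4:ℝ) • (gen i * (gen j * Lop g i j y)) else 0) else 0) = 0 := by
          rw [if_neg h1.1]
        rw [hrhs, e1]
        simp only [one_smul, sub_self, sub_zero]
    · rw [if_neg hkl, if_neg hkl, if_neg hkl, if_neg hkl]
      have hrhs : (if k = i then (if l = j then (4:ℝ) • (gen i * (gen j * Lop g i j y)) else 0) else 0) = 0 := by
        split_ifs with h h'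
        · exact absurd (h ▸ h' ▸ hij) hkl
        · rfl
        · rfl
      rw [hrhs]
      simp only [sub_self, sub_zero]
  have hsum : (F y - F (Dunkl.refl i y)) - (F (Dunkl.refl j y) - F (Dunkl.refl i (Dunkl.refl j y)))
      = (4:ℝ) • (gen i * (gen j * Lop g i j y)) := by
    simp only [hF, ← Finset.sum_sub_distrib]
    rw [Finset.sum_congr rfl fun k _ => Finset.sum_congr rfl fun l _ => hterm k l]
    simp [Finset.sum_ite_eq', Finset.mem_univ]
  have h4 : (4:ℝ) • (gen i * (gen j * Lop g i j y)) = 0 := by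
    rw [← hsum, hF0 y hy, hF0 _ hyi, hF0 _ hyj, hF0 _ hyij]
    simp only [sub_self, sub_zero]
  have hX : gen i * (gen j * Lop g i j y) = 0 := by
    rcases smul_eq_zero.mp h4 with h | h
    · norm_num at h
    · exact h
  have h5 : gen j * (gen i * (gen i * (gen j * Lop g i j y))) = Lop g i j y := by
    rw [gen_mul_self_left i, mul_neg, gen_mul_self_left j, neg_neg]
  rw [← h5, hX, mul_zero, mul_zero]

lemma Lop_eq_zero (hopen : IsOpen Ω) (hinv : ReflInv Ω)
    (hg : ContDiffOn ℝ 1 g Ω) (hsym : ∀ i : Fin n, ∀ x ∈ Ω, g (refl i x) = g x)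
    (hGamma : ∀ x ∈ Ω, sphDirac g x = 0)
    {i j : Fin n} (hij : i ≠ j) {y : Pt n} (hy : y ∈ Ω) :
    Lop g i j y = 0 := by
  rcases lt_or_gt_of_ne hij with h | h
  · exact Lop_eq_zero_of_lt hopen hinv hg hsym hGamma h hy
  · have := Lop_eq_zero_of_lt hopen hinv hg hsym hGamma h hy
    unfold Lop at this ⊢
    rw [← neg_eq_zero] at this
    rw [← this, neg_sub]

end St11Key2
/-- Let `n ≥ 2` and let `g` be a `ℤ₂ⁿ`-invariant `C¹` function on an open
reflection-invariant set `Ω` with `Γg = 0`. Then for every `x ∈ Ω` with `x̲ ≠ 0`, `g` is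
locally constant on `𝕊_x ∩ Ω`. -/
theorem statement11 (n : ℕ) (hn : 2 ≤ n) (Ω : Set (Pt n)) (hopen : IsOpen Ω)
    (hinv : ReflInv Ω) (g : Pt n → Cl n) (hg : ContDiffOn ℝ 1 g Ω)
    (hsym : ∀ i : Fin n, ∀ x ∈ Ω, g (refl i x) = g x)
    (hGamma : ∀ x ∈ Ω, sphDirac g x = 0) :
    ∀ x ∈ Ω, (∃ i : Fin n, x i.succ ≠ 0) →
      IsLocallyConstant
        (fun y : ({y : Pt n | y 0 = x 0 ∧ normSqIm y = normSqIm x} ∩ Ω : Set (Pt n)) =>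
          g y.1) := by
  classical
  intro x hx hex
  rw [IsLocallyConstant.iff_exists_open]
  rintro ⟨z, ⟨⟨hz0, hzn⟩, hzΩ⟩⟩
  have hr2pos : 0 < normSqIm x := by
    obtain ⟨i, hi⟩ := hex
    have h1 : 0 < (x i.succ)^2 := by positivity
    have h2 : (x i.succ)^2 ≤ normSqIm x :=
      Finset.single_le_sum (f := fun j : Fin n => (x j.succ)^2)
        (fun j _ => sq_nonneg _) (Finset.mem_univ i)
    linarith
  obtain ⟨i₀, hi₀⟩ : ∃ i₀ : Fin n, z i₀.succ ≠ 0 := by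
    by_contra hcon
    push_neg at hcon
    have h0 : normSqIm z = 0 := by
      unfold normSqIm
      exact Finset.sum_eq_zero fun j _ => by rw [hcon j]; ring
    rw [hzn] at h0
    exact absurd h0 (ne_of_gt hr2pos)
  set c : ℝ := z i₀.succ with hc
  set s : ℝ := if 0 < c then 1 else -1 with hsdef
  have hs : s = 1 ∨ s = -1 := by rw [hsdef]; split_ifs <;> simp
  have hsne : s ≠ 0 := by rcases hs with h | h <;> rw [h] <;> norm_num
  set r2 : ℝ := normSqIm x with hr2
  set q : Pt n → ℝ := fun w => ∑ j ∈ Finset.univ.erase i₀, (w j.succ)^2 with hqdef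
  have hqcont : Continuous q := by
    rw [hqdef]
    exact continuous_finset_sum _ fun j _ => (continuous_apply (j.succ : Fin (n+1))).pow 2
  have hsplit : ∀ w : Pt n, normSqIm w = (w i₀.succ)^2 + q w := by
    intro w
    rw [hqdef]
    exact (Finset.add_sum_erase Finset.univ (fun j : Fin n => (w j.succ)^2)
      (Finset.mem_univ i₀)).symm
  set φ : Pt n → ℝ := fun w => s * Real.sqrt (r2 - q w) with hφdef
  set ψ : Pt n → Pt n := fun w t => if t = 0 then z 0 else if t = i₀.succ then φ w else w t
    with hψdef
  have hqz : r2 - q z = c^2 := by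
    have h1 := hsplit z
    rw [hzn, ← hc] at h1
    linarith
  have habs : s * |c| = c := by
    rcases lt_trichotomy 0 c with h | h | h
    · rw [hsdef, if_pos h, abs_of_pos h, one_mul]
    · exact absurd h.symm hi₀
    · rw [hsdef, if_neg (not_lt.mpr h.le), abs_of_neg h]; ring
  have hψz : ψ z = z := by
    funext t
    simp only [hψdef]
    by_cases ht : t = 0
    · subst ht; rw [if_pos rfl]
    · by_cases ht2 : t = i₀.succ
      · subst ht2
        rw [if_neg (Fin.succ_ne_zero i₀), if_pos rfl]
        simp only [hφdef]
        rw [hqz, Real.sqrt_sq_eq_abs, habs, hc]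
      · rw [if_neg ht, if_neg ht2]
  have hψcont : Continuous ψ := by
    rw [hψdef]
    refine continuous_pi fun t => ?_
    by_cases ht : t = 0
    · simp only [ht, if_pos rfl]; exact continuous_const
    · by_cases ht2 : t = i₀.succ
      · simp only [if_neg ht, ht2, if_pos rfl, hφdef]
        exact continuous_const.mul (Real.continuous_sqrt.comp
          (continuous_const.sub hqcont))
      · simp only [if_neg ht, if_neg ht2]
        exact continuous_apply t
  have hWopen : IsOpen (ψ ⁻¹' Ω ∩ {w : Pt n | q w < r2}) :=
    (hopen.preimage hψcont).inter (isOpen_lt hqcont continuous_const)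
  have hzW : z ∈ ψ ⁻¹' Ω ∩ {w : Pt n | q w < r2} := by
    constructor
    · rw [Set.mem_preimage, hψz]; exact hzΩ
    · have hc2 : 0 < c^2 := by positivity
      simp only [Set.mem_setOf_eq]
      linarith
  obtain ⟨ε, hεpos, hball⟩ := Metric.isOpen_iff.mp hWopen z hzW
  set ε' : ℝ := min ε |c| with hε'def
  have hε'pos : 0 < ε' := lt_min hεpos (abs_pos.mpr hi₀)
  have hballW : Metric.ball z ε' ⊆ ψ ⁻¹' Ω ∩ {w : Pt n | q w < r2} :=
    (Metric.ball_subset_ball (min_le_left _ _)).trans hball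
  -- the key derivative computation
  have hkey : ∀ w ∈ Metric.ball z ε',
      HasFDerivAt (fun w => g (ψ w)) (0 : Pt n →L[ℝ] Cl n) w := by
    intro w hw
    have hwW := hballW hw
    have hψwΩ : ψ w ∈ Ω := hwW.1
    have hu : 0 < r2 - q w := by
      have := hwW.2
      simp only [Set.mem_setOf_eq] at this
      linarith
    have hsq : 0 < Real.sqrt (r2 - q w) := Real.sqrt_pos.mpr hu
    have hφw : φ w = s * Real.sqrt (r2 - q w) := by rw [hφdef]
    have hφw_ne : φ w ≠ 0 := by
      rw [hφw]; exact mul_ne_zero hsne (ne_of_gt hsq)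
    set a : ℝ := (φ w)⁻¹ with ha
    have haval : a = s * (Real.sqrt (r2 - q w))⁻¹ := by
      rcases hs with h | h <;> rw [ha, hφw, h]
      · rw [one_mul, one_mul]
      · rw [neg_one_mul, neg_one_mul, inv_neg]
    -- derivative of q
    have hq' : HasFDerivAt q (∑ j ∈ Finset.univ.erase i₀,
        (2 * w j.succ) • (ContinuousLinearMap.proj j.succ :
          Pt n →L[ℝ] ℝ)) w := by
      rw [hqdef]
      refine HasFDerivAt.fun_sum fun j _ => ?_
      have hj1 : HasFDerivAt (fun w : Pt n => w j.succ)
          ((ContinuousLinearMap.proj j.succ : Pt n →L[ℝ] ℝ)) w :=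
        (ContinuousLinearMap.proj (R := ℝ) (φ := fun _ : Fin (n+1) => ℝ) j.succ).hasFDerivAt
      have heqf : (fun w : Pt n => (w j.succ)^2) = fun w => w j.succ * w j.succ := by
        funext u; ring
      rw [heqf]
      have := hj1.mul hj1
      refine this.congr_fderiv ?_
      rw [two_mul, add_smul]
    have hf' : HasFDerivAt (fun w => r2 - q w)
        ((0 : Pt n →L[ℝ] ℝ) - ∑ j ∈ Finset.univ.erase i₀,
          (2 * w j.succ) • ContinuousLinearMap.proj j.succ) w :=
      (hasFDerivAt_const r2 w).sub hq'
    have hsqrt' := hf'.sqrt (ne_of_gt hu)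
    have hφ' := hsqrt'.const_mul s
    set Dφ : Pt n →L[ℝ] ℝ := ∑ j ∈ Finset.univ.erase i₀,
      (-(a * w j.succ)) • (ContinuousLinearMap.proj j.succ : Pt n →L[ℝ] ℝ) with hDφ
    have hφD : HasFDerivAt φ Dφ w := by
      rw [hφdef]
      refine hφ'.congr_fderiv (Eq.symm ?_)
      refine ContinuousLinearMap.ext fun v => ?_
      simp only [hDφ, ContinuousLinearMap.sum_apply, ContinuousLinearMap.smul_apply,
        ContinuousLinearMap.proj_apply, ContinuousLinearMap.sub_apply,
        ContinuousLinearMap.zero_apply, smul_eq_mul, zero_sub, mul_neg,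
        Finset.mul_sum, ← Finset.sum_neg_distrib]
      refine Finset.sum_congr rfl fun j _ => ?_
      rw [haval]
      field_simp
      simp only [ContinuousLinearMap.neg_apply, ContinuousLinearMap.smul_apply,
        ContinuousLinearMap.proj_apply, smul_eq_mul]
      ring
    set c' : ∀ _t : Fin (n+1), Pt n →L[ℝ] ℝ := fun t =>
      if t = 0 then 0 else if t = i₀.succ then Dφ else ContinuousLinearMap.proj t with hc'
    have hψ' : HasFDerivAt ψ (ContinuousLinearMap.pi c') w := by
      rw [hψdef]
      refine hasFDerivAt_pi.mpr fun t => ?_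
      by_cases ht : t = 0
      · subst ht
        have : c' 0 = 0 := by rw [hc']; simp
        rw [this]
        exact (hasFDerivAt_const (z 0) w).congr_of_eventuallyEq
          (Filter.Eventually.of_forall fun u => by simp)
      · by_cases ht2 : t = i₀.succ
        · subst ht2
          have : c' i₀.succ = Dφ := by
            rw [hc']; simp [Fin.succ_ne_zero]
          rw [this]
          exact hφD.congr_of_eventuallyEq
            (Filter.Eventually.of_forall fun u => by simp [Fin.succ_ne_zero])
        · have : c' t = ContinuousLinearMap.proj t := by
            rw [hc']; simp [ht, ht2]
          rw [this]
          exact ((ContinuousLinearMap.proj (R := ℝ) (φ := fun _ : Fin (n+1) => ℝ) t).hasFDerivAt).congr_of_eventuallyEq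
            (Filter.Eventually.of_forall fun u => by simp [ht, ht2])
    have hgd : DifferentiableAt ℝ g (ψ w) :=
      (hg.contDiffAt (hopen.mem_nhds hψwΩ)).differentiableAt one_ne_zero
    have hcomp : HasFDerivAt (fun w => g (ψ w))
        ((fderiv ℝ g (ψ w)).comp (ContinuousLinearMap.pi c')) w :=
      (hgd.hasFDerivAt.comp w hψ' : _)
    have hzero : (fderiv ℝ g (ψ w)).comp (ContinuousLinearMap.pi c') = 0 := by
      refine ContinuousLinearMap.ext fun v => ?_
      rw [ContinuousLinearMap.comp_apply, ContinuousLinearMap.zero_apply,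
        clm_sum_single (fderiv ℝ g (ψ w)) (ContinuousLinearMap.pi c' v)]
      rw [Fin.sum_univ_succ]
      have h0 : (ContinuousLinearMap.pi c' v) 0 = 0 := by
        rw [ContinuousLinearMap.pi_apply, hc']; simp
      rw [h0, zero_smul, zero_add]
      have hterm : ∀ j : Fin n,
          (ContinuousLinearMap.pi c' v) j.succ • fderiv ℝ g (ψ w) (Pi.single j.succ 1)
          = (if j = i₀ then Dφ v else v j.succ) • fderiv ℝ g (ψ w) (Pi.single j.succ 1) := by
        intro j
        congr 1
        rw [ContinuousLinearMap.pi_apply, hc']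
        simp only [Fin.succ_ne_zero, if_false, Fin.succ_inj]
        by_cases hj : j = i₀
        · rw [if_pos hj, if_pos hj]
        · rw [if_neg hj, if_neg hj, ContinuousLinearMap.proj_apply]
      rw [Finset.sum_congr rfl fun j _ => hterm j]
      rw [← Finset.add_sum_erase _ _ (Finset.mem_univ i₀), if_pos rfl]
      have hDv : Dφ v = ∑ j ∈ Finset.univ.erase i₀, (-(a * w j.succ)) * v j.succ := by
        rw [hDφ]
        simp [ContinuousLinearMap.sum_apply]
        ring
      rw [hDv, Finset.sum_smul, ← Finset.sum_add_distrib]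
      refine Finset.sum_eq_zero fun j hj => ?_
      have hjne : j ≠ i₀ := (Finset.mem_erase.mp hj).1
      rw [if_neg hjne]
      have hL := Lop_eq_zero hopen hinv hg hsym hGamma
        (show i₀ ≠ j from fun h => hjne h.symm) hψwΩ
      have hcoord1 : ψ w i₀.succ = φ w := by
        rw [hψdef]
        simp [Fin.succ_ne_zero]
      have hcoord2 : ψ w j.succ = w j.succ := by
        rw [hψdef]
        simp [Fin.succ_ne_zero, Fin.succ_inj, hjne]
      unfold Lop at hL
      simp only [pd] at hL
      rw [hcoord1, hcoord2] at hL
      have h2 : φ w • fderiv ℝ g (ψ w) (Pi.single j.succ 1)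
          = w j.succ • fderiv ℝ g (ψ w) (Pi.single i₀.succ 1) := by
        rwa [sub_eq_zero] at hL
      have hpdj : fderiv ℝ g (ψ w) (Pi.single j.succ 1)
          = (a * w j.succ) • fderiv ℝ g (ψ w) (Pi.single i₀.succ 1) := by
        calc fderiv ℝ g (ψ w) (Pi.single j.succ 1)
            = a • (φ w • fderiv ℝ g (ψ w) (Pi.single j.succ 1)) := by
              rw [smul_smul, ha, inv_mul_cancel₀ hφw_ne, one_smul]
          _ = (a * w j.succ) • fderiv ℝ g (ψ w) (Pi.single i₀.succ 1) := by
              rw [h2, smul_smul]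
      rw [hpdj, smul_smul, ← add_smul]
      convert zero_smul ℝ (fderiv ℝ g (ψ w) (Pi.single i₀.succ 1)) using 2
      ring
    rw [← hzero]
    exact hcomp
  -- constancy on the ball
  have hconst : ∀ w ∈ Metric.ball z ε', g (ψ w) = g (ψ z) := by
    intro w hw
    have hzball : z ∈ Metric.ball z ε' := Metric.mem_ball_self hε'pos
    have hle := Convex.norm_image_sub_le_of_norm_hasFDerivWithin_le
      (f := fun w => g (ψ w)) (f' := fun _ => (0 : Pt n →L[ℝ] Cl n)) (C := 0)
      (fun y hy => (hkey y hy).hasFDerivWithinAt) (fun y _ => by simp)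
      (convex_ball z ε') hzball hw
    rw [zero_mul] at hle
    exact sub_eq_zero.mp (norm_le_zero_iff.mp hle)
  refine ⟨Subtype.val ⁻¹' Metric.ball z ε',
    Metric.isOpen_ball.preimage continuous_subtype_val, ?_, ?_⟩
  · simp only [Set.mem_preimage]
    exact Metric.mem_ball_self hε'pos
  · rintro ⟨z', ⟨⟨hz'0, hz'n⟩, hz'Ω⟩⟩ hz'ball
    simp only [Set.mem_preimage] at hz'ball
    show g z' = g z
    have hclose : |z' i₀.succ - c| < |c| := by
      have h1 : dist (z' i₀.succ) (z i₀.succ) ≤ dist z' z := dist_le_pi_dist z' z i₀.succ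
      rw [Real.dist_eq, ← hc] at h1
      calc |z' i₀.succ - c| ≤ dist z' z := h1
        _ < ε' := hz'ball
        _ ≤ |c| := min_le_right _ _
    have hsign : s * |z' i₀.succ| = z' i₀.succ := by
      rcases lt_trichotomy 0 c with h | h | h
      · have hpos : 0 < z' i₀.succ := by
          rw [abs_of_pos h] at hclose
          have := abs_lt.mp hclose
          linarith
        rw [hsdef, if_pos h, one_mul, abs_of_pos hpos]
      · exact absurd h.symm hi₀
      · have hneg : z' i₀.succ < 0 := by
          rw [abs_of_neg h] at hclose
          have := abs_lt.mp hclose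
          linarith
        rw [hsdef, if_neg (not_lt.mpr h.le), abs_of_neg hneg]; ring
    have hq' : r2 - q z' = (z' i₀.succ)^2 := by
      have h1 := hsplit z'
      rw [hz'n] at h1
      linarith
    have hψz' : ψ z' = z' := by
      funext t
      simp only [hψdef]
      by_cases ht : t = 0
      · subst ht
        rw [if_pos rfl, hz0, hz'0]
      · by_cases ht2 : t = i₀.succ
        · subst ht2
          rw [if_neg (Fin.succ_ne_zero i₀), if_pos rfl]
          simp only [hφdef]
          rw [hq', Real.sqrt_sq_eq_abs, hsign]
        · rw [if_neg ht, if_neg ht2]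
    calc g z' = g (ψ z') := by rw [hψz']
      _ = g (ψ z) := hconst z' hz'ball
      _ = g z := by rw [hψz]
end
end
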